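/- Let S be a finite type of states, R : S → S → Prop a transition relation, final : S → Prop a set of final states, and s0 : S an initial state. Then no final state is reachable from s0 (under the reflexive–transitive closure of R) if and only if there exist a conflict sequence C of length n and an index i with i + 1 < n such that ⋂_{0 ≤ j ≤ i} C j ⊆ C (i + 1). -/
import Mathlib


/-- A state `s` can reach a final state in exactly `k` steps:
there is a path `t 0 = s, t 1, ..., t k` with `final (t k)`. -/
def ReachFinalIn {S : Type*} (R : S → S → Prop) (final : S → Prop) (s : S) (k : ℕ) : Prop :=
  ∃ t : ℕ → S, t 0 = s ∧ (∀ j < k, R (t j) (t (j + 1))) ∧ final (t k)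

/-- `C` is a conflict sequence of length `n` for the transition system `(S, R, final, s0)`. -/
def IsConflictSeq {S : Type*} (R : S → S → Prop) (final : S → Prop) (s0 : S)
    (n : ℕ) (C : ℕ → Set S) : Prop :=
  1 ≤ n ∧
  (∀ i < n, s0 ∈ C i) ∧
  (∀ s ∈ C 0, ¬ final s) ∧
  (∀ i, i + 1 < n → ∀ s ∈ C (i + 1), ∀ t, R s t → t ∈ C i)

lemma path_reach {S : Type*} (R : S → S → Prop) (t : ℕ → S) :
    ∀ k, (∀ j < k, R (t j) (t (j + 1))) → Relation.ReflTransGen R (t 0) (t k) := by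
  intro k
  induction k with
  | zero => intro _; exact .refl
  | succ k ih =>
    intro h
    exact .tail (ih fun j hj => h j (hj.trans (Nat.lt_succ_self k))) (h k (Nat.lt_succ_self k))

theorem stmt10 {S : Type*} [Finite S] (R : S → S → Prop) (final : S → Prop) (s0 : S) :
    (∀ t : S, Relation.ReflTransGen R s0 t → ¬ final t) ↔
    (∃ (n : ℕ) (C : ℕ → Set S) (i : ℕ),
      IsConflictSeq R final s0 n C ∧ i + 1 < n ∧ (⋂ j ≤ i, C j) ⊆ C (i + 1)) := by
  constructor
  · intro h
    set C : ℕ → Set S := fun i => {s | ∀ k ≤ i, ¬ ReachFinalIn R final s k} with hCdef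
    have hanti : ∀ i j, i ≤ j → C j ⊆ C i := fun i j hij s hs k hk => hs k (hk.trans hij)
    -- s0 is in every C i
    have hs0 : ∀ i, s0 ∈ C i := by
      intro i k _ hRF
      obtain ⟨t, ht0, hpath, hfin⟩ := hRF
      exact h (t k) (ht0 ▸ path_reach R t k hpath) hfin
    -- closure property
    have hclose : ∀ m, ∀ s ∈ C (m + 1), ∀ t, R s t → t ∈ C m := by
      intro m s hs t hRst k hk hRF
      obtain ⟨u, hu0, hpath, hfin⟩ := hRF
      apply hs (k + 1) (Nat.succ_le_succ hk)
      refine ⟨fun j => if j = 0 then s else u (j - 1), by simp, ?_, by simpa using hfin⟩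
      intro j hj
      rcases Nat.eq_zero_or_pos j with h0 | hpos
      · subst h0; simpa [hu0] using hRst
      · have h1 : j - 1 < k := by omega
        have := hpath (j - 1) h1
        have hj0 : j ≠ 0 := Nat.pos_iff_ne_zero.mp hpos
        simpa [hj0, Nat.sub_add_cancel hpos] using this
    -- stabilization
    have hstab : ∃ i, C i ⊆ C (i + 1) := by
      by_contra hcon
      push_neg at hcon
      simp only [Set.not_subset] at hcon
      choose f hf1 hf2 using hcon
      obtain ⟨a, b, hab, heq⟩ := Finite.exists_ne_map_eq_of_infinite f
      rcases hab.lt_or_gt with hlt | hlt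
      · exact hf2 a (heq ▸ hanti (a + 1) b hlt (hf1 b))
      · exact hf2 b (heq ▸ hanti (b + 1) a hlt (hf1 a))
    obtain ⟨i, hi⟩ := hstab
    refine ⟨i + 2, C, i, ⟨by omega, fun j _ => hs0 j, ?_, fun m _ => hclose m⟩,
      by omega, ?_⟩
    · intro s hs hfin
      exact hs 0 le_rfl ⟨fun _ => s, rfl, by omega, hfin⟩
    · intro s hs
      exact hi (Set.mem_iInter₂.mp hs i le_rfl)
  · rintro ⟨n, C, i, ⟨hn, hinit, hnofin, hclose⟩, hi, hsub⟩ t hreach hfin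
    set D : Set S := ⋂ j ≤ i, C j with hDdef
    have hmem : ∀ s, s ∈ D ↔ ∀ j ≤ i, s ∈ C j := fun s => Set.mem_iInter₂
    have hs0D : s0 ∈ D := (hmem s0).mpr fun j hj => hinit j (by omega)
    have hDclosed : ∀ s ∈ D, ∀ u, R s u → u ∈ D := by
      intro s hs u hRsu
      refine (hmem u).mpr fun j hj => ?_
      have hsj : s ∈ C (j + 1) := by
        rcases eq_or_lt_of_le hj with rfl | hjlt
        · exact hsub hs
        · exact (hmem s).mp hs (j + 1) hjlt
      exact hclose j (by omega) s hsj u hRsu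
    have hall : ∀ u, Relation.ReflTransGen R s0 u → u ∈ D := by
      intro u hu
      induction hu with
      | refl => exact hs0D
      | tail _ hR ih => exact hDclosed _ ih _ hR
    have htD : t ∈ D := hall t hreach
    exact hnofin t ((hmem t).mp htD 0 (Nat.zero_le i)) hfin
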